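/- arXiv:2511.11082 — 2 statements merged into one kernel-verified Lean document; each statement's English description precedes it below -/
import Mathlib

section
/- For α > 0, t > 0 and m ∈ ℝ with m ≠ 0, the Riemann–Liouville fractional integral of f(t) = e^{imt} equals (im)^{-α} e^{imt} (1 − Γ(α, imt)/Γ(α)), where Γ(s,x) = ∫ₓ^∞ τ^{s-1} e^{-τ} dτ is the upper incomplete gamma function (with the contour/branch taken in the natural way). -/
open intervalIntegral Real Filter Topology Complex

/-- Riemann-Liouville fractional integral of order `α > 0` of a complex-valued function. -/
noncomputable def rlIntegralC (α : ℝ) (f : ℝ → ℂ) (t : ℝ) : ℂ :=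
  (1 / (Real.Gamma α : ℂ)) * ∫ τ in (0:ℝ)..t, f τ * ((t : ℂ) - τ) ^ ((α : ℂ) - 1)

/-- Upper incomplete gamma function `Γ(s, x) = ∫ₓ^∞ τ^{s-1} e^{-τ} dτ`, with the contour
taken as the horizontal ray `x + u`, `u ∈ (0, ∞)` (the natural branch). -/
noncomputable def upperGamma (s x : ℂ) : ℂ :=
  ∫ u in Set.Ioi (0:ℝ), (x + u) ^ (s - 1) * Complex.exp (-(x + u))

/-! Substituting `τ ↦ t - τ` turns the fractional integral of `e^{zτ}` into
`e^{zt} / Γ(α) · ∫₀ᵗ τ^{α-1} e^{-zτ} dτ`, so with `z = im` the claim is the identity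
`Γ(α, zt) + z^α ∫₀ᵗ τ^{α-1} e^{-zτ} dτ = Γ(α)`, which holds for every `z ≠ 0` with `0 ≤ Re z`.
Instead of rotating the contour, differentiate in `t`: by dominated differentiation under the
integral sign, `t ↦ Γ(α, zt)` has derivative `-z (zt)^{α-1} e^{-zt} = -z^α t^{α-1} e^{-zt}`, which
cancels the derivative of the second term. So the left side is constant for `t > 0`, and as
`t → 0⁺` it tends to `Γ(α, 0) = Γ(α)` by dominated convergence. -/

open MeasureTheory Set

lemma rpow_le_rpow_add_rpow {a x c : ℝ} (γ : ℝ) (ha : 0 < a) (hax : a ≤ x) (hxc : x ≤ c) :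
    x ^ γ ≤ a ^ γ + c ^ γ := by
  rcases le_or_gt 0 γ with hγ | hγ
  · exact (rpow_le_rpow (ha.le.trans hax) hxc hγ).trans
      (le_add_of_nonneg_left (rpow_nonneg ha.le γ))
  · exact (rpow_le_rpow_of_nonpos ha hax hγ.le).trans
      (le_add_of_nonneg_right (rpow_nonneg (ha.le.trans (hax.trans hxc)) γ))

lemma mem_slitPlane_of_re_nonneg {w : ℂ} (hw : 0 ≤ w.re) (hw0 : w ≠ 0) : w ∈ slitPlane := by
  rw [mem_slitPlane_iff]
  by_contra! h
  exact hw0 (Complex.ext (le_antisymm h.1 hw) h.2)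

lemma mul_ofReal_cpow (z : ℂ) {s : ℝ} (hs : 0 < s) (w : ℂ) :
    (z * s) ^ w = z ^ w * (s : ℂ) ^ w := by
  have hs' : (s : ℂ) ≠ 0 := ofReal_ne_zero.2 hs.ne'
  rcases eq_or_ne z 0 with rfl | hz
  · rcases eq_or_ne w 0 with rfl | hw <;> simp [zero_cpow, *]
  · rw [cpow_def_of_ne_zero (mul_ne_zero hz hs'), cpow_def_of_ne_zero hz, cpow_def_of_ne_zero hs',
      log_mul_ofReal s hs z hz, ← ofReal_log hs.le, ← Complex.exp_add]
    ring_nf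

lemma tendsto_add_rpow_mul_exp_neg_mul_atTop (c γ : ℝ) {b : ℝ} (hb : 0 < b) :
    Tendsto (fun u : ℝ => (u + c) ^ γ * rexp (-b * u)) atTop (𝓝 0) := by
  have h := ((tendsto_rpow_mul_exp_neg_mul_atTop_nhds_zero γ b hb).comp
    (tendsto_atTop_add_const_right atTop c tendsto_id)).const_mul (rexp (b * c))
  rw [mul_zero] at h
  refine h.congr fun u => ?_
  simp only [Function.comp, id]
  rw [mul_left_comm, ← Real.exp_add]
  ring_nf

lemma integrableOn_add_rpow_mul_exp_neg {c : ℝ} (hc : 0 < c) (γ : ℝ) :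
    IntegrableOn (fun u : ℝ => (u + c) ^ γ * rexp (-u)) (Ioi 0) := by
  refine integrable_of_isBigO_exp_neg one_half_pos (fun u hu => ?_) ?_
  · have hu : 0 < u + c := by linarith [mem_Ici.1 hu]
    exact ((continuousAt_id.add continuousAt_const).rpow_const (Or.inl hu.ne')).mul
      (Real.continuous_exp.comp continuous_neg).continuousAt |>.continuousWithinAt
  · refine (Asymptotics.isLittleO_of_tendsto (fun u hu => absurd hu (Real.exp_ne_zero _))
      ((tendsto_add_rpow_mul_exp_neg_mul_atTop c γ one_half_pos).congr fun u => ?_)).isBigO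
    rw [eq_div_iff (Real.exp_ne_zero _), mul_assoc, ← Real.exp_add]
    ring_nf

lemma integrableOn_const_add_add_rpow_mul_exp_neg (A : ℝ) {c : ℝ} (hc : 0 < c) (γ : ℝ) :
    IntegrableOn (fun u : ℝ => (A + (u + c) ^ γ) * rexp (-u)) (Ioi 0) := by
  have hexp : IntegrableOn (fun u : ℝ => rexp (-u)) (Ioi 0) := by
    simpa using exp_neg_integrableOn_Ioi 0 one_pos
  simp_rw [add_mul]
  exact (hexp.const_mul A).add (integrableOn_add_rpow_mul_exp_neg hc γ)

noncomputable def cpowMulExpNeg (γ : ℝ) (w : ℂ) : ℂ := w ^ (γ : ℂ) * cexp (-w)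

lemma measurable_cpowMulExpNeg (γ : ℝ) : Measurable (cpowMulExpNeg γ) := by
  unfold cpowMulExpNeg
  fun_prop

lemma upperGamma_eq_integral_cpowMulExpNeg (α : ℝ) (x : ℂ) :
    upperGamma α x = ∫ u in Ioi (0:ℝ), cpowMulExpNeg (α - 1) (x + u) := by
  simp [upperGamma, cpowMulExpNeg]

lemma hasDerivAt_cpowMulExpNeg (γ : ℝ) {w : ℂ} (hw : w ∈ slitPlane) :
    HasDerivAt (cpowMulExpNeg γ) (γ * cpowMulExpNeg (γ - 1) w - cpowMulExpNeg γ w) w := by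
  have h : HasDerivAt (fun w : ℂ => w ^ (γ : ℂ) * cexp (-w))
      (γ * w ^ ((γ : ℂ) - 1) * 1 * cexp (-w) + w ^ (γ : ℂ) * (cexp (-w) * -1)) w :=
    ((hasDerivAt_id w).cpow_const hw).mul (hasDerivAt_id w).neg.cexp
  refine h.congr_deriv ?_
  simp only [cpowMulExpNeg, ofReal_sub, ofReal_one]
  ring

lemma norm_cpowMulExpNeg (γ : ℝ) (w : ℂ) : ‖cpowMulExpNeg γ w‖ = ‖w‖ ^ γ * rexp (-w.re) := by
  rw [cpowMulExpNeg, norm_mul, norm_cpow_real, Complex.norm_exp, neg_re]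

lemma norm_cpowMulExpNeg_le {γ a c : ℝ} {w : ℂ} (ha : 0 < a) (haw : a ≤ ‖w‖) (hwc : ‖w‖ ≤ c) :
    ‖cpowMulExpNeg γ w‖ ≤ (a ^ γ + c ^ γ) * rexp (-w.re) := by
  rw [norm_cpowMulExpNeg]
  exact mul_le_mul_of_nonneg_right (rpow_le_rpow_add_rpow γ ha haw hwc) (Real.exp_pos _).le

lemma HasDerivAt.cpowMulExpNeg {f : ℝ → ℂ} {f' : ℂ} {x : ℝ} (γ : ℝ) (hf : HasDerivAt f f' x)
    (hx : f x ∈ slitPlane) :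
    HasDerivAt (fun x => cpowMulExpNeg γ (f x))
      ((γ * cpowMulExpNeg (γ - 1) (f x) - cpowMulExpNeg γ (f x)) * f') x :=
  (hasDerivAt_cpowMulExpNeg γ hx).comp x hf

section RightHalfPlane

variable {z : ℂ} {α s u : ℝ}

lemma le_re_mul_ofReal_add_ofReal (hz : 0 ≤ z.re) (hs : 0 ≤ s) : u ≤ (z * s + u).re := by
  simpa using mul_nonneg hz hs

lemma le_norm_mul_ofReal_add_ofReal (hz : 0 ≤ z.re) (hs : 0 ≤ s) : u ≤ ‖z * s + u‖ :=
  (le_re_mul_ofReal_add_ofReal hz hs).trans (re_le_norm _)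

lemma norm_mul_le_norm_mul_ofReal_add_ofReal (hz : 0 ≤ z.re) (hs : 0 ≤ s) (hu : 0 ≤ u) :
    ‖z‖ * s ≤ ‖z * s + u‖ := by
  refine le_of_pow_le_pow_left₀ two_ne_zero (norm_nonneg _) ?_
  rw [mul_pow, Complex.sq_norm, Complex.sq_norm, normSq_apply, normSq_apply]
  simp only [add_re, mul_re, ofReal_re, ofReal_im, mul_zero, sub_zero, add_im, mul_im,
    zero_add, add_zero]
  nlinarith [mul_nonneg (mul_nonneg hz hs) hu]

lemma norm_mul_ofReal_add_ofReal_le (hs : 0 ≤ s) (hu : 0 ≤ u) : ‖z * s + u‖ ≤ ‖z‖ * s + u := by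
  refine (norm_add_le _ _).trans_eq ?_
  rw [norm_mul, norm_real, norm_real, Real.norm_of_nonneg hs, Real.norm_of_nonneg hu]

lemma mul_ofReal_add_ofReal_mem_slitPlane (hz : 0 ≤ z.re) (hz0 : z ≠ 0) (hs : 0 < s)
    (hu : 0 ≤ u) : z * s + u ∈ slitPlane := by
  refine mem_slitPlane_of_re_nonneg (hu.trans (le_re_mul_ofReal_add_ofReal hz hs.le)) ?_
  rw [← norm_pos_iff]
  exact (mul_pos (norm_pos_iff.2 hz0) hs).trans_le
    (norm_mul_le_norm_mul_ofReal_add_ofReal hz hs.le hu)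

lemma norm_cpowMulExpNeg_mul_ofReal_add_ofReal_le {γ a c : ℝ} (hz : 0 ≤ z.re) (hs : 0 ≤ s)
    (ha : 0 < a) (haw : a ≤ ‖z * s + u‖) (hwc : ‖z * s + u‖ ≤ c) :
    ‖cpowMulExpNeg γ (z * s + u)‖ ≤ (a ^ γ + c ^ γ) * rexp (-u) :=
  (norm_cpowMulExpNeg_le ha haw hwc).trans <| mul_le_mul_of_nonneg_left
    (Real.exp_le_exp.2 (neg_le_neg (le_re_mul_ofReal_add_ofReal hz hs)))
    (add_nonneg (rpow_nonneg ha.le γ) (rpow_nonneg (ha.le.trans (haw.trans hwc)) γ))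

lemma norm_deriv_cpowMulExpNeg_mul_ofReal_add_ofReal_le {γ a c : ℝ} (hz : 0 ≤ z.re)
    (hs : 0 ≤ s) (ha : 0 < a) (haw : a ≤ ‖z * s + u‖) (hwc : ‖z * s + u‖ ≤ c) :
    ‖γ * cpowMulExpNeg (γ - 1) (z * s + u) - cpowMulExpNeg γ (z * s + u)‖ ≤
      |γ| * ((a ^ (γ - 1) + c ^ (γ - 1)) * rexp (-u)) + (a ^ γ + c ^ γ) * rexp (-u) := by
  refine (norm_sub_le _ _).trans ?_
  rw [norm_mul, norm_real, Real.norm_eq_abs]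
  gcongr
  exacts [norm_cpowMulExpNeg_mul_ofReal_add_ofReal_le hz hs ha haw hwc,
    norm_cpowMulExpNeg_mul_ofReal_add_ofReal_le hz hs ha haw hwc]

lemma integrableOn_cpowMulExpNeg_mul_ofReal_add_ofReal (γ : ℝ) (hz : 0 ≤ z.re) (hz0 : z ≠ 0)
    (hs : 0 < s) : IntegrableOn (fun u : ℝ => cpowMulExpNeg γ (z * s + u)) (Ioi 0) := by
  have ha : 0 < ‖z‖ * s := mul_pos (norm_pos_iff.2 hz0) hs
  refine (integrableOn_const_add_add_rpow_mul_exp_neg ((‖z‖ * s) ^ γ) ha γ).mono'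
    ((measurable_cpowMulExpNeg γ).comp (by fun_prop)).aestronglyMeasurable ?_
  filter_upwards [ae_restrict_mem measurableSet_Ioi] with u hu
  exact norm_cpowMulExpNeg_mul_ofReal_add_ofReal_le hz hs.le ha
    (norm_mul_le_norm_mul_ofReal_add_ofReal hz hs.le (le_of_lt hu))
    ((norm_mul_ofReal_add_ofReal_le hs.le (le_of_lt hu)).trans_eq (add_comm _ _))

lemma tendsto_cpowMulExpNeg_mul_ofReal_add_ofReal_atTop (γ : ℝ) (hz : 0 ≤ z.re) (hz0 : z ≠ 0)
    (hs : 0 < s) : Tendsto (fun u : ℝ => cpowMulExpNeg γ (z * s + u)) atTop (𝓝 0) := by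
  have ha : 0 < ‖z‖ * s := mul_pos (norm_pos_iff.2 hz0) hs
  have hbound : Tendsto (fun u : ℝ => ((‖z‖ * s) ^ γ + (u + ‖z‖ * s) ^ γ) * rexp (-u))
      atTop (𝓝 0) := by
    simpa [add_mul] using ((Real.tendsto_exp_atBot.comp tendsto_neg_atTop_atBot).const_mul
      ((‖z‖ * s) ^ γ)).add (tendsto_add_rpow_mul_exp_neg_mul_atTop (‖z‖ * s) γ one_pos)
  refine squeeze_zero_norm' ?_ hbound
  filter_upwards [eventually_ge_atTop 0] with u hu
  exact norm_cpowMulExpNeg_mul_ofReal_add_ofReal_le hz hs.le ha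
    (norm_mul_le_norm_mul_ofReal_add_ofReal hz hs.le hu)
    ((norm_mul_ofReal_add_ofReal_le hs.le hu).trans_eq (add_comm _ _))

lemma integral_deriv_cpowMulExpNeg_mul_ofReal_add_ofReal (γ : ℝ) (hz : 0 ≤ z.re) (hz0 : z ≠ 0)
    (hs : 0 < s) :
    ∫ u in Ioi (0:ℝ), (γ * cpowMulExpNeg (γ - 1) (z * s + u) - cpowMulExpNeg γ (z * s + u)) =
      -cpowMulExpNeg γ (z * s) := by
  have hderiv : ∀ u ∈ Ici (0:ℝ), HasDerivAt (fun u : ℝ => cpowMulExpNeg γ (z * s + u))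
      (γ * cpowMulExpNeg (γ - 1) (z * s + u) - cpowMulExpNeg γ (z * s + u)) u := fun u hu => by
    have hf : HasDerivAt (fun u : ℝ => z * s + u) 1 u := by
      simpa using (hasDerivAt_id u).ofReal_comp.const_add (z * s)
    simpa using hf.cpowMulExpNeg γ (mul_ofReal_add_ofReal_mem_slitPlane hz hz0 hs hu)
  rw [integral_Ioi_of_hasDerivAt_of_tendsto' hderiv
    (((integrableOn_cpowMulExpNeg_mul_ofReal_add_ofReal (γ - 1) hz hz0 hs).const_mul _).sub
      (integrableOn_cpowMulExpNeg_mul_ofReal_add_ofReal γ hz hz0 hs))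
    (tendsto_cpowMulExpNeg_mul_ofReal_add_ofReal_atTop γ hz hz0 hs)]
  simp

theorem hasDerivAt_upperGamma_mul_ofReal (hz : 0 ≤ z.re) (hz0 : z ≠ 0) (hs : 0 < s) :
    HasDerivAt (fun s : ℝ => upperGamma α (z * s)) (-(z * cpowMulExpNeg (α - 1) (z * s))) s := by
  simp_rw [upperGamma_eq_integral_cpowMulExpNeg]
  set γ := α - 1
  set a := ‖z‖ * (s / 2)
  set b := ‖z‖ * (2 * s)
  have hz' : 0 < ‖z‖ := norm_pos_iff.2 hz0
  have ha : 0 < a := by positivity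
  have hb : 0 < b := by positivity
  have hx0 : ∀ x ∈ Ioo (s / 2) (2 * s), 0 < x := fun x hx => (half_pos hs).trans hx.1
  -- Near `s` the rays `z x + (0, ∞)` stay at distance `≥ a` from the branch point `0`,
  -- which gives a majorant uniform in `x`.
  have hnorm : ∀ x ∈ Ioo (s / 2) (2 * s), ∀ u : ℝ, 0 ≤ u →
      a ≤ ‖z * x + u‖ ∧ ‖z * x + u‖ ≤ u + b := fun x hx u hu =>
    ⟨(mul_le_mul_of_nonneg_left hx.1.le hz'.le).trans
        (norm_mul_le_norm_mul_ofReal_add_ofReal hz (hx0 x hx).le hu),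
      (norm_mul_ofReal_add_ofReal_le (hx0 x hx).le hu).trans (by nlinarith [hx.2])⟩
  have hint : ∀ x : ℝ, 0 < x → IntegrableOn (fun u : ℝ => cpowMulExpNeg γ (z * x + u)) (Ioi 0) :=
    fun x hx => integrableOn_cpowMulExpNeg_mul_ofReal_add_ofReal γ hz hz0 hx
  have hint' := (((integrableOn_cpowMulExpNeg_mul_ofReal_add_ofReal (γ - 1) hz hz0 hs).const_mul
    (γ : ℂ)).sub (hint s hs)).mul_const z
  have hbound : ∀ᵐ u : ℝ ∂(volume.restrict (Ioi 0)), ∀ x ∈ Ioo (s / 2) (2 * s),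
      ‖(γ * cpowMulExpNeg (γ - 1) (z * x + u) - cpowMulExpNeg γ (z * x + u)) * z‖ ≤
        (|γ| * ((a ^ (γ - 1) + (u + b) ^ (γ - 1)) * rexp (-u))
          + (a ^ γ + (u + b) ^ γ) * rexp (-u)) * ‖z‖ := by
    filter_upwards [ae_restrict_mem measurableSet_Ioi] with u hu x hx
    obtain ⟨haw, hwb⟩ := hnorm x hx u (le_of_lt hu)
    rw [norm_mul]
    gcongr
    exact norm_deriv_cpowMulExpNeg_mul_ofReal_add_ofReal_le hz (hx0 x hx).le ha haw hwb
  have hdiff : ∀ᵐ u : ℝ ∂(volume.restrict (Ioi 0)), ∀ x ∈ Ioo (s / 2) (2 * s),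
      HasDerivAt (fun x : ℝ => cpowMulExpNeg γ (z * x + u))
        ((γ * cpowMulExpNeg (γ - 1) (z * x + u) - cpowMulExpNeg γ (z * x + u)) * z) x := by
    filter_upwards [ae_restrict_mem measurableSet_Ioi] with u hu x hx
    have hf : HasDerivAt (fun x : ℝ => z * x + u) z x := by
      simpa using ((hasDerivAt_id x).ofReal_comp.const_mul z).add_const (u : ℂ)
    exact hf.cpowMulExpNeg γ (mul_ofReal_add_ofReal_mem_slitPlane hz hz0 (hx0 x hx) (le_of_lt hu))
  obtain ⟨-, hderiv⟩ := hasDerivAt_integral_of_dominated_loc_of_deriv_le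
    (Ioo_mem_nhds (half_lt_self hs) (by linarith))
    ((eventually_gt_nhds hs).mono fun x hx => (hint x hx).aestronglyMeasurable) (hint s hs)
    hint'.aestronglyMeasurable hbound
    ((((integrableOn_const_add_add_rpow_mul_exp_neg _ hb (γ - 1)).const_mul |γ|).add
      (integrableOn_const_add_add_rpow_mul_exp_neg _ hb γ)).mul_const ‖z‖) hdiff
  refine hderiv.congr_deriv ?_
  rw [MeasureTheory.integral_mul_const,
    integral_deriv_cpowMulExpNeg_mul_ofReal_add_ofReal γ hz hz0 hs]
  ring

theorem tendsto_upperGamma_mul_ofReal_nhdsGT_zero (hα : 0 < α) (hz : 0 ≤ z.re) :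
    Tendsto (fun s : ℝ => upperGamma α (z * s)) (𝓝[>] 0) (𝓝 (Complex.Gamma α)) := by
  have hGamma : Complex.Gamma α = ∫ u in Ioi (0:ℝ), cpowMulExpNeg (α - 1) (z * (0:ℝ) + u) := by
    rw [Complex.Gamma_eq_integral (by simpa using hα), GammaIntegral]
    refine setIntegral_congr_fun measurableSet_Ioi fun u _ => ?_
    simp [cpowMulExpNeg, mul_comm]
  simp_rw [upperGamma_eq_integral_cpowMulExpNeg]
  rw [hGamma]
  refine tendsto_integral_filter_of_dominated_convergence
    (fun u => (u ^ (α - 1) + (u + (‖z‖ + 1)) ^ (α - 1)) * rexp (-u)) ?_ ?_ ?_ ?_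
  · exact Eventually.of_forall fun s =>
      ((measurable_cpowMulExpNeg _).comp (by fun_prop)).aestronglyMeasurable
  · filter_upwards [Ioo_mem_nhdsGT zero_lt_one] with s hs
    filter_upwards [ae_restrict_mem measurableSet_Ioi] with u hu
    refine norm_cpowMulExpNeg_mul_ofReal_add_ofReal_le hz hs.1.le hu
      (le_norm_mul_ofReal_add_ofReal hz hs.1.le) ((norm_mul_ofReal_add_ofReal_le hs.1.le
        (le_of_lt hu)).trans ?_)
    nlinarith [norm_nonneg z, hs.2]
  · refine IntegrableOn.integrable ?_
    simp_rw [add_mul]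
    exact ((Real.GammaIntegral_convergent hα).congr_fun (fun u _ => mul_comm _ _)
      measurableSet_Ioi).add (integrableOn_add_rpow_mul_exp_neg (by positivity) _)
  · filter_upwards [ae_restrict_mem measurableSet_Ioi] with u hu
    have hf : HasDerivAt (fun s : ℝ => z * s + u) z 0 := by
      simpa using ((hasDerivAt_id (0:ℝ)).ofReal_comp.const_mul z).add_const (u : ℂ)
    have hcont := (hf.cpowMulExpNeg (α - 1) (by simpa using hu)).continuousAt
    exact hcont.tendsto.mono_left nhdsWithin_le_nhds

lemma intervalIntegrable_cpow_mul_cexp_neg (hα : 0 < α) (hz : 0 ≤ z.re) {t : ℝ} (ht : 0 ≤ t) :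
    IntervalIntegrable (fun τ : ℝ => (τ : ℂ) ^ ((α : ℂ) - 1) * cexp (-(z * τ))) volume 0 t := by
  have hrpow := intervalIntegral.intervalIntegrable_rpow' (a := 0) (b := t)
    (show (-1:ℝ) < α - 1 by linarith)
  rw [intervalIntegrable_iff_integrableOn_Ioc_of_le ht] at hrpow ⊢
  refine hrpow.mono' (by fun_prop) ?_
  filter_upwards [ae_restrict_mem measurableSet_Ioc] with τ hτ
  rw [norm_mul, norm_cpow_eq_rpow_re_of_pos hτ.1, Complex.norm_exp]
  refine mul_le_of_le_one_right (rpow_nonneg hτ.1.le _) ?_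
  simpa using mul_nonneg hz hτ.1.le

theorem upperGamma_mul_ofReal_add_cpow_mul_integral (hα : 0 < α) (hz : 0 ≤ z.re) (hz0 : z ≠ 0)
    {t : ℝ} (ht : 0 < t) :
    upperGamma α (z * t) + z ^ (α : ℂ) *
      ∫ τ in (0:ℝ)..t, (τ : ℂ) ^ ((α : ℂ) - 1) * cexp (-(z * τ)) = Complex.Gamma α := by
  set P : ℝ → ℂ := fun s => ∫ τ in (0:ℝ)..s, (τ : ℂ) ^ ((α : ℂ) - 1) * cexp (-(z * τ))
  set D : ℝ → ℂ := fun s => upperGamma α (z * s) + z ^ (α : ℂ) * P s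
  have hD : ∀ s ∈ Ioi (0:ℝ), HasDerivAt D 0 s := by
    intro s hs
    have hcont : ContinuousAt (fun τ : ℝ => (τ : ℂ) ^ ((α : ℂ) - 1) * cexp (-(z * τ))) s :=
      (continuousAt_ofReal_cpow_const _ _ (Or.inr (ne_of_gt hs))).mul (by fun_prop)
    have hP := intervalIntegral.integral_hasDerivAt_right
      (intervalIntegrable_cpow_mul_cexp_neg hα hz (le_of_lt hs))
      (StronglyMeasurable.stronglyMeasurableAtFilter (by fun_prop)) hcont
    refine ((hasDerivAt_upperGamma_mul_ofReal hz hz0 hs).add (hP.const_mul _)).congr_deriv ?_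
    have hzα : z ^ (α : ℂ) = z * z ^ ((α : ℂ) - 1) := by
      rw [cpow_sub _ _ hz0, cpow_one]
      field_simp
    rw [cpowMulExpNeg, mul_ofReal_cpow z hs, hzα]
    push_cast
    ring
  have hconst : ∀ s ∈ Ioi (0:ℝ), D s = D t := fun s hs =>
    isOpen_Ioi.is_const_of_deriv_eq_zero isPreconnected_Ioi
      (fun x hx => (hD x hx).differentiableAt.differentiableWithinAt)
      (fun x hx => (hD x hx).deriv) hs ht
  have hP0 : Tendsto P (𝓝[>] 0) (𝓝 0) := by
    have hc := intervalIntegral.continuousOn_primitive_interval'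
      (intervalIntegrable_cpow_mul_cexp_neg hα hz ht.le) left_mem_uIcc 0 left_mem_uIcc
    rw [uIcc_of_le ht.le] at hc
    have h := hc.mono Ioo_subset_Icc_self
    rw [ContinuousWithinAt, nhdsWithin_Ioo_eq_nhdsGT ht] at h
    simpa using h
  have hlim := (tendsto_upperGamma_mul_ofReal_nhdsGT_zero hα hz).add (hP0.const_mul (z ^ (α : ℂ)))
  rw [mul_zero, add_zero] at hlim
  exact tendsto_nhds_unique (tendsto_const_nhds.congr' (eventually_nhdsWithin_of_forall
    fun s hs => (hconst s hs).symm)) hlim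

end RightHalfPlane

lemma rlIntegralC_cexp_mul (α : ℝ) (z : ℂ) (t : ℝ) :
    rlIntegralC α (fun τ => cexp (z * τ)) t = 1 / (Real.Gamma α : ℂ) *
      (cexp (z * t) * ∫ τ in (0:ℝ)..t, (τ : ℂ) ^ ((α : ℂ) - 1) * cexp (-(z * τ))) := by
  rw [rlIntegralC]
  congr 1
  let f : ℝ → ℂ := fun τ => cexp (z * t) * ((τ : ℂ) ^ ((α : ℂ) - 1) * cexp (-(z * τ)))
  calc ∫ τ in (0:ℝ)..t, cexp (z * τ) * ((t : ℂ) - τ) ^ ((α : ℂ) - 1)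
      = ∫ τ in (0:ℝ)..t, f (t - τ) := by
        refine intervalIntegral.integral_congr fun τ _ => ?_
        simp only [f, ofReal_sub, mul_left_comm (cexp (z * t)), ← Complex.exp_add]
        ring_nf
    _ = ∫ τ in (0:ℝ)..t, f τ := by simp
    _ = _ := intervalIntegral.integral_const_mul _ _

theorem rl_exponential (α : ℝ) (hα : 0 < α) (m : ℝ) (hm : m ≠ 0)
    (t : ℝ) (ht : 0 < t) :
    rlIntegralC α (fun τ => Complex.exp (Complex.I * m * τ)) t =
      (Complex.I * m) ^ (-(α : ℂ)) * Complex.exp (Complex.I * m * t) *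
        (1 - upperGamma (α : ℂ) (Complex.I * m * t) / Complex.Gamma (α : ℂ)) := by
  have hz0 : Complex.I * m ≠ 0 := mul_ne_zero I_ne_zero (ofReal_ne_zero.2 hm)
  have hkey := upperGamma_mul_ofReal_add_cpow_mul_integral hα (by simp) hz0 ht
  have hΓ : (Real.Gamma α : ℂ) ≠ 0 := ofReal_ne_zero.2 (Real.Gamma_pos_of_pos hα).ne'
  have hzα : (Complex.I * m) ^ (α : ℂ) ≠ 0 := by simp [hz0]
  rw [Complex.Gamma_ofReal] at hkey ⊢
  rw [rlIntegralC_cexp_mul, cpow_neg]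
  field_simp
  linear_combination hkey
end

section
/- Let N ∈ ℕ and define the (N+1)×(N+1) matrices M and P by M_{jk} = (2/N) ε_{jk} cos(jkπ/N) and P_{jk} = cos(jkπ/N) for 0 ≤ j,k ≤ N, where ε_{jk} = 1/4 if j,k ∈ {0,N}, ε_{jk} = 1/2 if exactly one of j,k lies in {0,N}, and ε_{jk} = 1 otherwise. Then M · P = I, i.e., M is the inverse of P. -/
/-!
Write `ε j k = w j * w k`, where `w` are the trapezoidal weights (`1/2` at the endpoints `0` and
`N`, `1` elsewhere). Then `(M * P) j l = (2 w_j / N) ∑ₖ w_k cos (jkπ/N) cos (klπ/N)`, and the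
product-to-sum formula reduces it to trapezoidal sums `∑ₖ w_k cos (kmπ/N)` with `m = j ± l`.
As `k ↦ cos (kmπ/N)` is symmetric about `N`, such a sum is half of the full-period sum
`∑_{k < 2N} cos (kmπ/N)`, a geometric sum over `2N`-th roots of unity: it is `2N` if `2N ∣ m`
and `0` otherwise. For `j, l ≤ N` we have `2N ∣ j - l` iff `j = l`, and `2N ∣ j + l` iff
`j = l ∈ {0, N}`, which is exactly where the weight `w_j = 1/2` halves the doubled contribution.
-/

open Real Matrix Finset

theorem sum_range_cos_mul_eq_zero {n : ℕ} {θ : ℝ} (hθ : cos θ ≠ 1)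
    (hnθ : cos (n * θ) = 1) :
    ∑ k ∈ range n, cos (k * θ) = 0 := by
  set z := Complex.exp (θ * Complex.I)
  have hz : z ≠ 1 := fun h => hθ (by simpa [z] using congrArg Complex.re h)
  have hzn : z ^ n = 1 := by
    obtain ⟨j, hj⟩ := (cos_eq_one_iff _).1 hnθ
    rw [← Complex.exp_nat_mul, ← mul_assoc, ← Complex.ofReal_natCast, ← Complex.ofReal_mul,
      ← hj]
    push_cast
    rw [mul_assoc]
    exact Complex.exp_int_mul_two_pi_mul_I j
  have hre (k : ℕ) : cos (k * θ) = (z ^ k).re := by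
    rw [← Complex.exp_nat_mul, ← mul_assoc, ← Complex.ofReal_natCast, ← Complex.ofReal_mul,
      Complex.exp_ofReal_mul_I_re]
  simp_rw [hre, ← Complex.re_sum, geom_sum_eq hz, hzn, sub_self, zero_div, Complex.zero_re]

theorem sum_range_two_mul_cos_int_mul {N : ℕ} (hN : N ≠ 0) (m : ℤ) :
    ∑ k ∈ range (2 * N), cos (k * (m * π / N)) =
      if 2 * (N : ℤ) ∣ m then (2 * N : ℝ) else 0 := by
  have hNr : (N : ℝ) ≠ 0 := Nat.cast_ne_zero.2 hN
  split_ifs with hm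
  · obtain ⟨t, rfl⟩ := hm
    have hterm (k : ℕ) : cos (k * ((2 * N * t : ℝ) * π / N)) = 1 := by
      rw [← cos_int_mul_two_pi (k * t)]
      push_cast
      field_simp
    simp [hterm]
  · refine sum_range_cos_mul_eq_zero (fun h => hm ?_) ?_
    · obtain ⟨t, ht⟩ := (cos_eq_one_iff _).1 h
      refine ⟨t, ?_⟩
      field_simp at ht
      exact_mod_cast (by linear_combination -ht : (m : ℝ) = 2 * N * t)
    · rw [← cos_int_mul_two_pi m]
      push_cast
      field_simp

theorem sum_range_two_mul_add_eq_of_symm {M : Type*} [AddCommMonoid M] {N : ℕ} {f : ℕ → M}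
    (hf : ∀ k ≤ N, f (N + k) = f (N - k)) :
    ∑ k ∈ range (2 * N), f k + f 0 + f N = 2 • ∑ k ∈ range (N + 1), f k := by
  have hreflect : ∑ k ∈ range N, f (N + k) = ∑ k ∈ range N, f (k + 1) := by
    rw [← sum_range_reflect (fun k => f (k + 1))]
    refine sum_congr rfl fun k hk => ?_
    have hk := mem_range.1 hk
    rw [hf k hk.le]
    congr 1
    omega
  rw [two_mul, sum_range_add, hreflect, two_nsmul]
  nth_rw 2 [sum_range_succ]
  rw [sum_range_succ']
  abel

noncomputable def trapWeight (N k : ℕ) : ℝ := if k = 0 ∨ k = N then 1 / 2 else 1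

theorem sum_range_trapWeight_mul {N : ℕ} (hN : N ≠ 0) (f : ℕ → ℝ) :
    ∑ k ∈ range (N + 1), trapWeight N k * f k =
      ∑ k ∈ range (N + 1), f k - f 0 / 2 - f N / 2 := by
  have hw (k : ℕ) : trapWeight N k * f k =
      f k - (if k = 0 then f 0 / 2 else 0) - (if k = N then f N / 2 else 0) := by
    unfold trapWeight
    split_ifs <;> subst_vars <;> first | omega | ring
  simp [hw, sum_sub_distrib]

theorem cos_add_eq_cos_sub_of_sin_eq_zero {x y : ℝ} (hx : sin x = 0) :
    cos (x + y) = cos (x - y) := by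
  rw [cos_add, cos_sub, hx]; ring

theorem sum_range_trapWeight_mul_cos_int_mul {N : ℕ} (hN : N ≠ 0) (m : ℤ) :
    ∑ k ∈ range (N + 1), trapWeight N k * cos (k * (m * π / N)) =
      if 2 * (N : ℤ) ∣ m then (N : ℝ) else 0 := by
  have hNr : (N : ℝ) ≠ 0 := Nat.cast_ne_zero.2 hN
  have hsymm :=
    sum_range_two_mul_add_eq_of_symm (N := N) (f := fun k => cos (k * (m * π / N)))
    fun k hk => by
      push_cast [hk]
      rw [add_mul, sub_mul]
      refine cos_add_eq_cos_sub_of_sin_eq_zero ?_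
      rw [mul_div_cancel₀ _ hNr]
      exact sin_int_mul_pi m
  rw [sum_range_trapWeight_mul hN]
  rw [sum_range_two_mul_cos_int_mul hN] at hsymm
  simp only [Nat.cast_zero, zero_mul, cos_zero, nsmul_eq_mul, Nat.cast_ofNat] at hsymm ⊢
  split_ifs at hsymm ⊢ <;> linarith

theorem two_mul_dvd_add_iff {N j l : ℕ} (hj : j ≤ N) (hl : l ≤ N) :
    2 * (N : ℤ) ∣ j + l ↔ j = l ∧ (j = 0 ∨ j = N) := by
  constructor
  · rintro ⟨c, hc⟩
    rcases le_or_gt c 0 with hc0 | hc0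
    · have : (j : ℤ) + l ≤ 0 := by nlinarith
      omega
    · have : (j : ℤ) + l ≥ 2 * N := by nlinarith
      omega
  · rintro ⟨rfl, rfl | rfl⟩
    · simp
    · exact ⟨1, by ring⟩

theorem two_mul_dvd_sub_iff {N j l : ℕ} (hN : N ≠ 0) (hj : j ≤ N) (hl : l ≤ N) :
    2 * (N : ℤ) ∣ j - l ↔ j = l := by
  refine ⟨fun h => ?_, fun h => by simp [h]⟩
  have := Int.eq_zero_of_abs_lt_dvd h (by rw [abs_lt]; omega)
  omega

theorem cos_mul_cos_eq_half_add (j k l : ℕ) (θ : ℝ) :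
    cos (j * k * θ) * cos (k * l * θ) =
      (cos (k * (((j + l : ℤ) : ℝ) * θ)) + cos (k * (((j - l : ℤ) : ℝ) * θ))) / 2 := by
  push_cast
  rw [show (k : ℝ) * ((j + l) * θ) = j * k * θ + k * l * θ by ring,
    show (k : ℝ) * ((j - l) * θ) = j * k * θ - k * l * θ by ring, cos_add, cos_sub]
  ring

theorem trapWeight_mul_sum_cos_mul_cos {N j l : ℕ} (hN : N ≠ 0) (hj : j ≤ N) (hl : l ≤ N) :
    2 * trapWeight N j *
        ∑ k ∈ range (N + 1), trapWeight N k * (cos (j * k * π / N) * cos (k * l * π / N)) =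
      if j = l then (N : ℝ) else 0 := by
  have hNr : (N : ℝ) ≠ 0 := Nat.cast_ne_zero.2 hN
  have hsum :
      ∑ k ∈ range (N + 1), trapWeight N k * (cos (j * k * π / N) * cos (k * l * π / N)) =
      ((if 2 * (N : ℤ) ∣ j + l then (N : ℝ) else 0) +
        (if 2 * (N : ℤ) ∣ j - l then (N : ℝ) else 0)) / 2 := by
    rw [← sum_range_trapWeight_mul_cos_int_mul hN, ← sum_range_trapWeight_mul_cos_int_mul hN,
      ← sum_add_distrib, sum_div]
    refine sum_congr rfl fun k _ => ?_
    simp only [mul_div_assoc]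
    rw [cos_mul_cos_eq_half_add]
    ring
  rw [hsum]
  simp only [two_mul_dvd_add_iff hj hl, two_mul_dvd_sub_iff hN hj hl, trapWeight]
  split_ifs <;> first | omega | (field_simp; norm_num)

theorem dct_matrix_inverse (N : ℕ) (hN : 0 < N) :
    let ε : Fin (N + 1) → Fin (N + 1) → ℝ := fun j k =>
      if ((j : ℕ) = 0 ∨ (j : ℕ) = N) ∧ ((k : ℕ) = 0 ∨ (k : ℕ) = N) then 1 / 4
      else if ((j : ℕ) = 0 ∨ (j : ℕ) = N) ∨ ((k : ℕ) = 0 ∨ (k : ℕ) = N) then 1 / 2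
      else 1
    let M : Matrix (Fin (N + 1)) (Fin (N + 1)) ℝ := fun j k =>
      (2 / (N : ℝ)) * ε j k * Real.cos ((j : ℝ) * (k : ℝ) * π / N)
    let P : Matrix (Fin (N + 1)) (Fin (N + 1)) ℝ := fun j k =>
      Real.cos ((j : ℝ) * (k : ℝ) * π / N)
    M * P = 1 := by
  intro ε M P
  have hε (j k : Fin (N + 1)) : ε j k = trapWeight N j * trapWeight N k := by
    simp only [ε, trapWeight]
    split_ifs <;> (try tauto) <;> norm_num
  ext j l
  calc (M * P) j l = (2 * trapWeight N j * ∑ k ∈ range (N + 1),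
        trapWeight N k * (cos (j * k * π / N) * cos (k * l * π / N))) / N := by
        rw [mul_apply, ← Fin.sum_univ_eq_sum_range
          (fun k => trapWeight N k * (cos (j * k * π / N) * cos (k * l * π / N))), mul_sum,
          sum_div]
        refine sum_congr rfl fun k _ => ?_
        simp only [M, P, hε]
        ring
    _ = (1 : Matrix (Fin (N + 1)) (Fin (N + 1)) ℝ) j l := by
        rw [trapWeight_mul_sum_cos_mul_cos hN.ne' j.is_le l.is_le, one_apply]
        simp only [Fin.val_inj]
        split_ifs
        · exact div_self (Nat.cast_ne_zero.2 hN.ne')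
        · exact zero_div _
end
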